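/- arXiv:1310.1654 — 2 statements merged into one kernel-verified Lean document; each statement's English description precedes it below -/
import Mathlib

section
/- Let A be an s × k random matrix with i.i.d. N(0,1) entries. Then with probability at least 1 − k·e^{−s}, every x ∈ ℝᵏ satisfies ‖Ax‖₁ ≤ 2s·‖x‖₁ (equivalently, sup_{x ≠ 0} ‖Ax‖₁/‖x‖₁ ≤ 2s). -/
/-!
Bound `‖Ax‖₁` by the largest column sum `maxⱼ ∑ᵢ |Aᵢⱼ|` times `‖x‖₁`. Each column sum is a sum
of `s` independent copies of `|g|`, `g ~ N(0,1)`, and `𝔼 e^{2|g|} ≤ 2e² ≤ e³`; the exponential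
Markov inequality gives `ℙ(∑ᵢ |Aᵢⱼ| ≥ 2s) ≤ e^{3s - 4s} = e^{-s}`. A union bound over the `k`
columns finishes the proof.
-/

open MeasureTheory ProbabilityTheory Real

/-- ℓ¹ norm of a vector in ℝᵐ. -/
noncomputable def l1 {m : ℕ} (x : Fin m → ℝ) : ℝ := ∑ i, |x i|

/-- Law of an `s × k` random matrix with i.i.d. N(0,1) entries. -/
noncomputable def stdGaussianMatrix (s k : ℕ) : Measure (Fin s → Fin k → ℝ) :=
  Measure.pi fun _ => Measure.pi fun _ => gaussianReal 0 1

open scoped ENNReal NNReal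

lemma l1_mulVec_le_of_forall_sum_abs_le {s k : ℕ} {A : Fin s → Fin k → ℝ} {C : ℝ}
    (hA : ∀ j, ∑ i, |A i j| ≤ C) (x : Fin k → ℝ) :
    l1 (fun i => ∑ j, A i j * x j) ≤ C * l1 x :=
  calc l1 (fun i => ∑ j, A i j * x j)
      ≤ ∑ i, ∑ j, |A i j| * |x j| := by
        unfold l1
        gcongr with i
        simpa only [abs_mul] using Finset.abs_sum_le_sum_abs (fun j => A i j * x j) Finset.univ
    _ = ∑ j, (∑ i, |A i j|) * |x j| := by
        rw [Finset.sum_comm]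
        simp only [Finset.sum_mul]
    _ ≤ ∑ j, C * |x j| := by gcongr with j; exact hA j
    _ = C * l1 x := (Finset.mul_sum _ _ _).symm

lemma measure_pi_le_sum_le_exp_mul_lintegral_pow {α ι : Type*} [MeasurableSpace α] [Fintype ι]
    (μ : Measure α) [IsProbabilityMeasure μ] {f : α → ℝ} (hf : Measurable f) {t : ℝ} (ht : 0 ≤ t)
    (c : ℝ) :
    Measure.pi (fun _ : ι => μ) {x | c ≤ ∑ i, f (x i)} ≤
      ENNReal.ofReal (exp (-(t * c))) *
        (∫⁻ y, ENNReal.ofReal (exp (t * f y)) ∂μ) ^ Fintype.card ι := by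
  set g : α → ℝ≥0∞ := fun y => ENNReal.ofReal (exp (t * f y))
  have hg : Measurable g := by fun_prop
  have hgx : ∀ i, Measurable fun x : ι → α => g (x i) := fun i => hg.comp (measurable_pi_apply i)
  have hprod : ∀ x : ι → α, ENNReal.ofReal (exp (t * ∑ i, f (x i))) = ∏ i, g (x i) := fun x => by
    rw [Finset.mul_sum, exp_sum, ENNReal.ofReal_prod_of_nonneg fun _ _ => (exp_pos _).le]
  have hint : ∫⁻ x, ∏ i, g (x i) ∂Measure.pi (fun _ : ι => μ) =
      (∫⁻ y, g y ∂μ) ^ Fintype.card ι := by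
    rw [lintegral_prod_eq_prod_lintegral_of_indepFun _ _
      (iIndepFun_pi (X := fun _ => g) fun _ => hg.aemeasurable) hgx]
    simp only [(measurePreserving_eval (fun _ : ι => μ) _).lintegral_comp hg,
      Finset.prod_const, Finset.card_univ]
  have hexp_ne_zero : ENNReal.ofReal (exp (t * c)) ≠ 0 := by simp [exp_pos]
  calc Measure.pi (fun _ : ι => μ) {x | c ≤ ∑ i, f (x i)}
      ≤ Measure.pi (fun _ : ι => μ) {x | ENNReal.ofReal (exp (t * c)) ≤ ∏ i, g (x i)} := by
        refine measure_mono fun x hx => ?_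
        simp only [Set.mem_ofPred_eq, ← hprod] at hx ⊢
        gcongr
    _ ≤ (∫⁻ x, ∏ i, g (x i) ∂Measure.pi (fun _ : ι => μ)) / ENNReal.ofReal (exp (t * c)) :=
        meas_ge_le_lintegral_div
          (Finset.measurable_prod _ fun i _ => hgx i).aemeasurable hexp_ne_zero
          ENNReal.ofReal_ne_top
    _ = _ := by
        rw [hint, ENNReal.div_eq_inv_mul, ← ENNReal.ofReal_inv_of_pos (exp_pos _), ← exp_neg]

lemma lintegral_exp_mul_gaussianReal (v : ℝ≥0) (t : ℝ) :
    ∫⁻ y, ENNReal.ofReal (exp (t * y)) ∂gaussianReal 0 v =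
      ENNReal.ofReal (exp (v * t ^ 2 / 2)) := by
  rw [← ofReal_integral_eq_lintegral_ofReal (integrable_exp_mul_gaussianReal t)
    (ae_of_all _ fun _ => (exp_pos _).le)]
  have hmgf := congrFun (mgf_fun_id_gaussianReal (μ := 0) (v := v)) t
  simp only [mgf, zero_mul, zero_add] at hmgf
  rw [hmgf]

lemma lintegral_exp_mul_abs_gaussianReal_le (v : ℝ≥0) (t : ℝ) :
    ∫⁻ y, ENNReal.ofReal (exp (t * |y|)) ∂gaussianReal 0 v ≤
      2 * ENNReal.ofReal (exp (v * t ^ 2 / 2)) :=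
  calc ∫⁻ y, ENNReal.ofReal (exp (t * |y|)) ∂gaussianReal 0 v
      ≤ ∫⁻ y, ENNReal.ofReal (exp (t * y)) + ENNReal.ofReal (exp (-t * y)) ∂gaussianReal 0 v := by
        refine lintegral_mono fun y => ?_
        rw [← ENNReal.ofReal_add (exp_pos _).le (exp_pos _).le]
        gcongr
        rcases abs_choice y with hy | hy
        · rw [hy]; linarith [exp_pos (-t * y)]
        · rw [hy, mul_neg, ← neg_mul]; linarith [exp_pos (t * y)]
    _ = 2 * ENNReal.ofReal (exp (v * t ^ 2 / 2)) := by
        rw [lintegral_add_left (by fun_prop), lintegral_exp_mul_gaussianReal,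
          lintegral_exp_mul_gaussianReal, neg_sq, two_mul]

lemma measure_pi_gaussianReal_two_mul_le_sum_abs (s : ℕ) :
    Measure.pi (fun _ : Fin s => gaussianReal 0 1) {x | 2 * (s : ℝ) ≤ ∑ i, |x i|} ≤
      ENNReal.ofReal (exp (-s)) := by
  have h2e : 2 * exp 2 ≤ exp 3 := by
    have : (2 : ℝ) ≤ exp 1 := by linarith [add_one_le_exp (1 : ℝ)]
    calc 2 * exp 2 ≤ exp 1 * exp 2 := by gcongr
      _ = exp 3 := by rw [← exp_add]; norm_num
  have hchernoff := measure_pi_le_sum_le_exp_mul_lintegral_pow (ι := Fin s) (gaussianReal 0 1)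
    measurable_abs zero_le_two (2 * s)
  rw [Fintype.card_fin] at hchernoff
  calc _ ≤ _ := hchernoff
    _ ≤ ENNReal.ofReal (exp (-(2 * (2 * s)))) * (2 * ENNReal.ofReal (exp (1 * 2 ^ 2 / 2))) ^ s := by
        gcongr; exact_mod_cast lintegral_exp_mul_abs_gaussianReal_le 1 2
    _ = ENNReal.ofReal (exp (-(4 * s)) * (2 * exp 2) ^ s) := by
        rw [ENNReal.ofReal_mul (exp_pos _).le, ENNReal.ofReal_pow (by positivity),
          ENNReal.ofReal_mul zero_le_two, ENNReal.ofReal_ofNat]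
        ring_nf
    _ ≤ ENNReal.ofReal (exp (-(4 * s)) * exp 3 ^ s) := by gcongr
    _ = ENNReal.ofReal (exp (-s)) := by
        rw [← exp_nat_mul, ← exp_add]; ring_nf

lemma measurePreserving_stdGaussianMatrix_column (s k : ℕ) (j : Fin k) :
    MeasurePreserving (fun A : Fin s → Fin k → ℝ => fun i => A i j) (stdGaussianMatrix s k)
      (Measure.pi fun _ : Fin s => gaussianReal 0 1) :=
  measurePreserving_pi _ _ fun _ => measurePreserving_eval _ j

lemma stdGaussianMatrix_two_mul_le_sum_abs_column (s k : ℕ) (j : Fin k) :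
    stdGaussianMatrix s k {A | 2 * (s : ℝ) ≤ ∑ i, |A i j|} ≤ ENNReal.ofReal (exp (-s)) := by
  refine le_of_eq_of_le ?_ (measure_pi_gaussianReal_two_mul_le_sum_abs s)
  exact (measurePreserving_stdGaussianMatrix_column s k j).measure_preimage
    (measurableSet_le measurable_const
      (Finset.measurable_sum _ fun i _ => (measurable_pi_apply i).abs)).nullMeasurableSet

/-- Let `A` be an `s × k` random matrix with i.i.d. N(0,1) entries.  Then
with probability at least `1 − k e^{−s}`, every `x ∈ ℝᵏ` satisfies `‖Ax‖₁ ≤ 2s ‖x‖₁`. -/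
theorem l1_operator_upper_bound_gaussian (s k : ℕ) :
    stdGaussianMatrix s k
      {A : Fin s → Fin k → ℝ | ∀ x : Fin k → ℝ,
        l1 (fun i => ∑ j, A i j * x j) ≤ 2 * s * l1 x} ≥
    ENNReal.ofReal (1 - (k : ℝ) * Real.exp (-(s : ℝ))) := by
  have : IsProbabilityMeasure (stdGaussianMatrix s k) := by
    unfold stdGaussianMatrix; infer_instance
  set bad : Set (Fin s → Fin k → ℝ) := ⋃ j, {A | 2 * (s : ℝ) < ∑ i, |A i j|}
  have hbad : stdGaussianMatrix s k bad ≤ ENNReal.ofReal (k * exp (-s)) :=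
    calc stdGaussianMatrix s k bad
        ≤ ∑ j : Fin k, stdGaussianMatrix s k {A | 2 * (s : ℝ) ≤ ∑ i, |A i j|} :=
          (measure_iUnion_fintype_le _ _).trans <| Finset.sum_le_sum fun j _ =>
            measure_mono <| Set.ofPred_subset_ofPred.2 fun _ => le_of_lt
      _ ≤ ∑ _j : Fin k, ENNReal.ofReal (exp (-s)) := by
          gcongr with j; exact stdGaussianMatrix_two_mul_le_sum_abs_column s k j
      _ = ENNReal.ofReal (k * exp (-s)) := by
          simp [ENNReal.ofReal_mul]
  have hgood : badᶜ ⊆ {A | ∀ x, l1 (fun i => ∑ j, A i j * x j) ≤ 2 * s * l1 x} := fun A hA =>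
    l1_mulVec_le_of_forall_sum_abs_le <| by simpa [bad] using hA
  have hbad_meas : MeasurableSet bad :=
    .iUnion fun j => measurableSet_lt measurable_const (by fun_prop)
  calc ENNReal.ofReal (1 - k * exp (-s))
      = 1 - ENNReal.ofReal (k * exp (-s)) := by
        rw [ENNReal.ofReal_sub _ (by positivity), ENNReal.ofReal_one]
    _ ≤ 1 - stdGaussianMatrix s k bad := tsub_le_tsub_left hbad 1
    _ = stdGaussianMatrix s k badᶜ := (prob_compl_eq_one_sub hbad_meas).symm
    _ ≤ _ := measure_mono hgood
end

section
/- Let v ∈ ℝⁿ be a nonzero vector with ‖v‖₀ < n − k, and let ṽ₁, …, ṽ_k be independent standard Gaussian random vectors in ℝⁿ. Let W = span{v, ṽ₁, …, ṽ_k}. Then with probability 1, every z ∈ W that is not a scalar multiple of v satisfies ‖z‖₀ > ‖v‖₀; in particular, v is (up to nonzero scalar multiples) the unique sparsest nonzero element of W. -/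
open MeasureTheory ProbabilityTheory Real

/-- ℓ⁰ "norm": number of nonzero entries. -/
noncomputable def l0 {n : ℕ} (x : Fin n → ℝ) : ℕ :=
  (Finset.univ.filter fun i => x i ≠ 0).card

/-- Law of a standard Gaussian random vector in ℝⁿ (i.i.d. N(0,1) entries). -/
noncomputable def stdGaussianVec (n : ℕ) : Measure (Fin n → ℝ) :=
  Measure.pi fun _ => gaussianReal 0 1


instance stdGaussianVec.instIsProbabilityMeasure (n : ℕ) :
    IsProbabilityMeasure (stdGaussianVec n) := by
  rw [stdGaussianVec]; infer_instance

lemma pi_fin_ac {α : Type*} [MeasurableSpace α] {μ ν : Measure α}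
    [SigmaFinite μ] [SigmaFinite ν] (h : μ ≪ ν) (m : ℕ) :
    Measure.pi (fun _ : Fin m => μ) ≪ Measure.pi (fun _ : Fin m => ν) := by
  induction m with
  | zero => rw [Measure.pi_of_empty, Measure.pi_of_empty]
  | succ m ih =>
    have h1 := MeasureTheory.measurePreserving_piFinSuccAbove
      (fun _ : Fin (m+1) => μ) (Fin.last m)
    have h2 := MeasureTheory.measurePreserving_piFinSuccAbove
      (fun _ : Fin (m+1) => ν) (Fin.last m)
    set e := MeasurableEquiv.piFinSuccAbove (fun _ : Fin (m+1) => α) (Fin.last m) with he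
    rw [← (h1.symm e).map_eq, ← (h2.symm e).map_eq]
    exact (h.prod ih).map e.symm.measurable

lemma stdGaussianVec_ac (n : ℕ) : stdGaussianVec n ≪ (volume : Measure (Fin n → ℝ)) := by
  rw [stdGaussianVec, volume_pi]
  exact pi_fin_ac (gaussianReal_absolutelyContinuous 0 one_ne_zero) n

lemma gaussian_submodule_null {n : ℕ} (S : Submodule ℝ (Fin n → ℝ)) (hS : S ≠ ⊤) :
    stdGaussianVec n (S : Set (Fin n → ℝ)) = 0 :=
  stdGaussianVec_ac n (Measure.addHaar_submodule volume S hS)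

lemma key_measurable {n k m : ℕ} (ι : Fin (k+1) → Fin n) (u : Fin (k+1) → ℝ) :
    MeasurableSet {ω : Fin m → Fin n → ℝ |
      ¬ LinearIndependent ℝ (Fin.cons u (fun i => (ω i) ∘ ι) : Fin (m+1) → Fin (k+1) → ℝ)} := by
  have hF : Measurable (fun ω : Fin m → Fin n → ℝ =>
      (Fin.cons u (fun i => (ω i) ∘ ι) : Fin (m+1) → Fin (k+1) → ℝ)) := by
    apply measurable_pi_lambda
    intro r
    induction r using Fin.cases with
    | zero => simpa using measurable_const
    | succ i =>
      simp only [Fin.cons_succ]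
      exact measurable_pi_lambda _ fun s => (measurable_pi_apply (ι s)).comp (measurable_pi_apply i)
  exact hF (isOpen_setOf_linearIndependent.measurableSet.compl)

lemma key {n k : ℕ} (ι : Fin (k+1) → Fin n) (hι : Function.Injective ι)
    (u : Fin (k+1) → ℝ) (hu : u ≠ 0) :
    ∀ m : ℕ, m ≤ k →
    (Measure.pi fun _ : Fin m => stdGaussianVec n)
      {ω : Fin m → Fin n → ℝ |
        ¬ LinearIndependent ℝ (Fin.cons u (fun i => (ω i) ∘ ι) : Fin (m+1) → Fin (k+1) → ℝ)}
      = 0 := by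
  intro m
  induction m with
  | zero =>
    intro _
    convert measure_empty (μ := Measure.pi fun _ : Fin 0 => stdGaussianVec n)
    rw [Set.eq_empty_iff_forall_notMem]
    intro ω hω
    apply hω
    rw [linearIndependent_fin_cons]
    refine ⟨linearIndependent_empty_type, ?_⟩
    rw [Set.range_eq_empty, Submodule.span_empty, Submodule.mem_bot]
    exact hu
  | succ m ih =>
    intro hm
    have ihm := ih (le_of_lt (Nat.lt_of_succ_le hm))
    set γ := stdGaussianVec n with hγ
    set Pm := (Measure.pi fun _ : Fin m => stdGaussianVec n) with hPm
    set BadM := {ω : Fin m → Fin n → ℝ |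
        ¬ LinearIndependent ℝ (Fin.cons u (fun i => (ω i) ∘ ι) : Fin (m+1) → Fin (k+1) → ℝ)}
      with hBadM
    set Bad := {ω : Fin (m+1) → Fin n → ℝ |
        ¬ LinearIndependent ℝ (Fin.cons u (fun i => (ω i) ∘ ι) : Fin (m+2) → Fin (k+1) → ℝ)}
      with hBad
    have hBadMeas : MeasurableSet Bad := key_measurable ι u
    set e := MeasurableEquiv.piFinSuccAbove (fun _ : Fin (m+1) => (Fin n → ℝ)) (Fin.last m)
      with he
    have h1 : MeasurePreserving e (Measure.pi fun _ : Fin (m+1) => stdGaussianVec n)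
        (γ.prod Pm) := MeasureTheory.measurePreserving_piFinSuccAbove
          (fun _ : Fin (m+1) => stdGaussianVec n) (Fin.last m)
    have hBadeq : Bad = e ⁻¹' (e.symm ⁻¹' Bad) := by
      ext ω; simp
    rw [hBadeq, h1.measure_preimage (hBadMeas.preimage e.symm.measurable).nullMeasurableSet]
    -- now compute the product measure
    have hS : MeasurableSet (e.symm ⁻¹' Bad) := hBadMeas.preimage e.symm.measurable
    rw [Measure.prod_apply_symm hS]
    -- slices
    have hslice : ∀ w : Fin m → Fin n → ℝ, w ∉ BadM →
        γ ((fun x => (x, w)) ⁻¹' (e.symm ⁻¹' Bad)) = 0 := by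
      intro w hw
      set f := (Fin.cons u (fun i => (w i) ∘ ι) : Fin (m+1) → Fin (k+1) → ℝ) with hf
      have hfind : LinearIndependent ℝ f := not_not.mp hw
      have hsliceeq : ((fun x => (x, w)) ⁻¹' (e.symm ⁻¹' Bad)) =
          {x : Fin n → ℝ | x ∘ ι ∈ Submodule.span ℝ (Set.range f)} := by
        ext x
        have hins : e.symm (x, w) = Fin.snoc w x := by
          ext i
          simp [he, MeasurableEquiv.piFinSuccAbove, Fin.snocEquiv]
        simp only [Set.mem_preimage, hins, hBad, Set.mem_setOf_eq]
        have hfam : (Fin.cons u (fun i => ((Fin.snoc w x : Fin (m+1) → Fin n → ℝ) i) ∘ ι)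
            : Fin (m+2) → Fin (k+1) → ℝ) = Fin.snoc f (x ∘ ι) := by
          have h2 : (fun i => ((Fin.snoc w x : Fin (m+1) → Fin n → ℝ) i) ∘ ι)
              = Fin.snoc (fun i => (w i) ∘ ι) (x ∘ ι) := by
            have := Fin.comp_snoc (g := fun z : Fin n → ℝ => z ∘ ι) (q := w) (y := x)
            exact this
          rw [h2, hf, Fin.cons_snoc_eq_snoc_cons]
        rw [hfam, linearIndependent_fin_snoc]
        simp [hfind]
      rw [hsliceeq]
      -- this is a proper submodule preimage
      set S0 := Submodule.span ℝ (Set.range f) with hS0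
      have hS0top : S0 ≠ ⊤ := by
        have : S0 < ⊤ := by
          apply span_lt_top_of_card_lt_finrank
          have h1' : (Set.range f).toFinset.card ≤ m + 1 := by
            rw [Set.toFinset_range]
            exact (Finset.card_image_le).trans (by simp)
          have h2' : Module.finrank ℝ (Fin (k+1) → ℝ) = k + 1 := Module.finrank_fin_fun ℝ
          omega
        exact this.ne
      have hcomap : (Submodule.comap (LinearMap.funLeft ℝ ℝ ι) S0) ≠ ⊤ := by
        intro hcon
        apply hS0top
        rw [Submodule.eq_top_iff']
        intro y
        obtain ⟨x, rfl⟩ := LinearMap.funLeft_surjective_of_injective ℝ ℝ ι hι y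
        have : x ∈ Submodule.comap (LinearMap.funLeft ℝ ℝ ι) S0 := hcon ▸ Submodule.mem_top
        exact this
      have : {x : Fin n → ℝ | x ∘ ι ∈ S0} =
          ((Submodule.comap (LinearMap.funLeft ℝ ℝ ι) S0 : Submodule ℝ (Fin n → ℝ)) :
            Set (Fin n → ℝ)) := rfl
      rw [this]
      exact gaussian_submodule_null _ hcomap
    have hae : ∀ᵐ w ∂Pm, γ ((fun x => (x, w)) ⁻¹' (e.symm ⁻¹' Bad)) = 0 := by
      have hBadMnull : Pm BadM = 0 := ihm
      have : ∀ᵐ w ∂Pm, w ∉ BadM := by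
        rw [ae_iff]
        simpa using hBadMnull
      filter_upwards [this] with w hw
      exact hslice w hw
    rw [lintegral_congr_ae hae, lintegral_zero]

/-- Let `v ∈ ℝⁿ` be nonzero with `‖v‖₀ < n − k`, and let `ṽ₁, …, ṽ_k` be
independent standard Gaussian vectors in ℝⁿ.  Let `W = span{v, ṽ₁, …, ṽ_k}`.  Then with
probability 1, every `z ∈ W` that is not a scalar multiple of `v` satisfies `‖z‖₀ > ‖v‖₀`;
in particular, `v` is (up to nonzero scalar multiples) the unique sparsest nonzero element
of `W`. -/
theorem planted_vector_is_sparsest_almost_surely {n k : ℕ} (v : Fin n → ℝ) (hv : v ≠ 0)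
    (hsparse : l0 v < n - k) :
    (Measure.pi fun _ : Fin k => stdGaussianVec n)
      {ω : Fin k → Fin n → ℝ |
        ∀ z : Fin n → ℝ, z ∈ Submodule.span ℝ (insert v (Set.range ω)) →
          (¬ ∃ t : ℝ, z = t • v) → l0 v < l0 z} = 1 := by
  classical
  set P := (Measure.pi fun _ : Fin k => stdGaussianVec n) with hP
  set Tgt := {ω : Fin k → Fin n → ℝ |
        ∀ z : Fin n → ℝ, z ∈ Submodule.span ℝ (insert v (Set.range ω)) →
          (¬ ∃ t : ℝ, z = t • v) → l0 v < l0 z} with hTgt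
  -- the "good coefficient" for each injection
  set U : (Fin (k+1) → Fin n) → (Fin (k+1) → ℝ) :=
    fun ι => if v ∘ ι = 0 then (fun _ => 1) else v ∘ ι with hU
  have hUne : ∀ ι, U ι ≠ 0 := by
    intro ι
    by_cases h : v ∘ ι = 0
    · simp only [hU, h, if_pos]
      intro hcon
      have := congrFun hcon 0
      norm_num at this
    · simpa [hU, h] using h
  -- complement is contained in union of bad sets
  have hsub : Tgtᶜ ⊆ ⋃ ι : Fin (k+1) → Fin n,
      {ω : Fin k → Fin n → ℝ | Function.Injective ι ∧
        ¬ LinearIndependent ℝ (Fin.cons (U ι) (fun i => (ω i) ∘ ι) :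
          Fin (k+1) → Fin (k+1) → ℝ)} := by
    intro ω hω
    simp only [hTgt, Set.mem_compl_iff, Set.mem_setOf_eq, not_forall] at hω
    obtain ⟨z, hzmem, hznot, hzle⟩ := hω
    have hzle' : l0 z ≤ l0 v := not_lt.mp hzle
    -- decompose z
    rw [Submodule.mem_span_insert] at hzmem
    obtain ⟨t, z', hz'mem, hzeq⟩ := hzmem
    rw [Submodule.mem_span_range_iff_exists_fun] at hz'mem
    obtain ⟨c, hc⟩ := hz'mem
    -- zero set of z is large
    set Z := Finset.univ.filter (fun i => z i = 0) with hZ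
    have hcard : k + 1 ≤ Z.card := by
      have h1 : Z.card + l0 z = n := by
        have := Finset.card_filter_add_card_filter_not
          (s := (Finset.univ : Finset (Fin n))) (p := fun i => z i = 0)
        simpa [l0, hZ, ne_eq] using this
      have h2 : l0 v + k < n := by omega
      omega
    -- an injection into the zero set
    have hemb : Nonempty (Fin (k+1) ↪ (Z : Finset (Fin n))) := by
      apply Function.Embedding.nonempty_of_card_le
      simpa [Fintype.card_coe] using hcard
    obtain ⟨emb⟩ := hemb
    set ι : Fin (k+1) → Fin n := fun r => (emb r : Fin n) with hι'
    have hιinj : Function.Injective ι := fun a b hab =>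
      emb.injective (Subtype.coe_injective hab)
    have hzι : ∀ r, z (ι r) = 0 := by
      intro r
      exact (Finset.mem_filter.mp (emb r).2).2
    refine Set.mem_iUnion.mpr ⟨ι, hιinj, ?_⟩
    -- suppose linear independence; derive contradiction
    intro hind
    have hrel : ∀ r, t * v (ι r) + ∑ i, c i * ω i (ι r) = 0 := by
      intro r
      have := hzι r
      rw [hzeq] at this
      simpa [← hc, Finset.sum_apply] using this
    by_cases hvι : v ∘ ι = 0
    · -- U ι = const 1; subfamily independence forces c = 0, so z = t • v
      have hg : LinearIndependent ℝ (fun i : Fin k => (ω i) ∘ ι) :=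
        (linearIndependent_fin_cons.mp hind).1
      have hc0 : ∀ i, c i = 0 := by
        apply Fintype.linearIndependent_iff.mp hg
        funext r
        have hvr : v (ι r) = 0 := congrFun hvι r
        have := hrel r
        simp only [Finset.sum_apply, Pi.smul_apply, smul_eq_mul, Function.comp_apply]
        rw [hvr] at this
        simpa using this
      apply hznot
      refine ⟨t, ?_⟩
      rw [hzeq, ← hc]
      simp [hc0]
    · -- U ι = v ∘ ι; full independence forces t = 0 and c = 0, so z = 0
      have hUι : U ι = v ∘ ι := by simp [hU, hvι]
      rw [hUι] at hind
      have hall := Fintype.linearIndependent_iff.mp hind (Fin.cons t c)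
      have hsum : ∑ r, (Fin.cons t c : Fin (k+1) → ℝ) r •
          (Fin.cons (v ∘ ι) (fun i => (ω i) ∘ ι) : Fin (k+1) → Fin (k+1) → ℝ) r = 0 := by
        rw [Fin.sum_univ_succ]
        simp only [Fin.cons_zero, Fin.cons_succ]
        funext r
        simpa [Finset.sum_apply] using hrel r
      have hzero := hall hsum
      have ht0 : t = 0 := by simpa using hzero 0
      have hc0 : ∀ i, c i = 0 := fun i => by simpa using hzero i.succ
      apply hznot
      refine ⟨0, ?_⟩
      rw [hzeq, ← hc]
      simp [hc0, ht0]
  -- measure of the union is zero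
  have hnull : P (⋃ ι : Fin (k+1) → Fin n,
      {ω : Fin k → Fin n → ℝ | Function.Injective ι ∧
        ¬ LinearIndependent ℝ (Fin.cons (U ι) (fun i => (ω i) ∘ ι) :
          Fin (k+1) → Fin (k+1) → ℝ)}) = 0 := by
    apply measure_iUnion_null
    intro ι
    by_cases hι : Function.Injective ι
    · exact measure_mono_null (fun ω h => h.2) (key ι hι (U ι) (hUne ι) k le_rfl)
    · convert measure_empty (μ := P)
      rw [Set.eq_empty_iff_forall_notMem]
      intro ω hω
      exact hι hω.1
  have hcnull : P Tgtᶜ = 0 := measure_mono_null hsub hnull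
  have h1 : (1 : ENNReal) ≤ P Tgt := by
    have := measure_union_le (μ := P) Tgt Tgtᶜ
    rw [Set.union_compl_self, hcnull, add_zero] at this
    simpa using this
  exact le_antisymm prob_le_one h1
end
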